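/- For every r > 0, the K-function estimator with plugged-in estimated intensity is consistent: K̂_{n,β̂_n}(r) → K(r) in probability as n → ∞. -/

import Mathlib

open MeasureTheory Filter Topology ENNReal

noncomputable section

namespace KFunCLT

/-- Points of `ℝ^d`. -/
abbrev Pt (d : ℕ) := EuclideanSpace ℝ (Fin d)

/-- The observation window `W_n = [-n^{1/d}/2, n^{1/d}/2]^d` of volume `n`. -/
def Wn (d n : ℕ) : Set (Pt d) :=
  {x | ∀ i, |x i| ≤ (n : ℝ) ^ ((1 : ℝ) / (d : ℝ)) / 2}

/-- The window `W_n` translated by `v`. -/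
def WnT (d n : ℕ) (v : Pt d) : Set (Pt d) := (fun x => x + v) '' Wn d n

/-- The edge correction factor `e_n(x,y) = |W_n ∩ W_{n,x-y}|⁻¹`. -/
def en (d n : ℕ) (x y : Pt d) : ℝ :=
  ((volume (Wn d n ∩ WnT d n (x - y))).toReal)⁻¹

/-- Pairs of distinct points of a set. -/
def pairs {α : Type*} (A : Set α) : Set (α × α) :=
  {q | q.1 ∈ A ∧ q.2 ∈ A ∧ q.1 ≠ q.2}

/-- Triples of pairwise distinct points of a set. -/
def triples {α : Type*} (A : Set α) : Set (α × α × α) :=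
  {q | q.1 ∈ A ∧ q.2.1 ∈ A ∧ q.2.2 ∈ A ∧ q.1 ≠ q.2.1 ∧ q.1 ≠ q.2.2 ∧ q.2.1 ≠ q.2.2}

/-- Quadruples of pairwise distinct points of a set. -/
def quads {α : Type*} (A : Set α) : Set (α × α × α × α) :=
  {q | q.1 ∈ A ∧ q.2.1 ∈ A ∧ q.2.2.1 ∈ A ∧ q.2.2.2 ∈ A ∧
    q.1 ≠ q.2.1 ∧ q.1 ≠ q.2.2.1 ∧ q.1 ≠ q.2.2.2 ∧
    q.2.1 ≠ q.2.2.1 ∧ q.2.1 ≠ q.2.2.2 ∧ q.2.2.1 ≠ q.2.2.2}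

/-- Sum of `f(x,y)` over pairs of distinct points `x ≠ y` of `A`. -/
def pairSum {α F : Type*} [AddCommMonoid F] [TopologicalSpace F]
    (A : Set α) (f : α → α → F) : F :=
  ∑' q : pairs A, f q.val.1 q.val.2

/-- The estimator `K̂_{n,β}(r)` of the `K`-function, using intensity parameter `β`. -/
def Khat {Ω : Type*} {d p : ℕ} (P : Ω → Set (Pt d))
    (ρ : EuclideanSpace ℝ (Fin p) → Pt d → ℝ)
    (n : ℕ) (b : EuclideanSpace ℝ (Fin p)) (r : ℝ) (ω : Ω) : ℝ :=
  pairSum (P ω ∩ Wn d n) fun x y =>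
    if ‖x - y‖ ≤ r then en d n x y / (ρ b x * ρ b y) else 0

/-- The vector `H_{n,β}(r) ∈ ℝ^p`, i.e. minus the sum over pairs of distinct points of
`P ∩ W_n` at distance at most `r` of `e_n(x,y) ∇_β log(ρ_β(x)ρ_β(y)) / (ρ_β(x)ρ_β(y))`. -/
def Hfun {Ω : Type*} {d p : ℕ} (P : Ω → Set (Pt d))
    (ρ : EuclideanSpace ℝ (Fin p) → Pt d → ℝ)
    (n : ℕ) (b : EuclideanSpace ℝ (Fin p)) (r : ℝ) (ω : Ω) :
    EuclideanSpace ℝ (Fin p) :=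
  - pairSum (P ω ∩ Wn d n) fun x y =>
      if ‖x - y‖ ≤ r then
        (en d n x y / (ρ b x * ρ b y)) •
          gradient (fun b' => Real.log (ρ b' x * ρ b' y)) b
      else (0 : EuclideanSpace ℝ (Fin p))

/-- Assumption (R): uniform bounds on `ρ_β` and its first two derivatives in `β`,
for `β` in a neighbourhood of the true parameter `β*`. -/
def AssumptionR {d p : ℕ} (ρ : EuclideanSpace ℝ (Fin p) → Pt d → ℝ)
    (βs : EuclideanSpace ℝ (Fin p)) : Prop :=
  ∃ ε > (0 : ℝ), ∃ c₁ c₂ c₃ c₄ : ℝ, 0 < c₁ ∧ 0 < c₂ ∧ 0 < c₃ ∧ 0 < c₄ ∧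
    ∀ b : EuclideanSpace ℝ (Fin p), ‖b - βs‖ ≤ ε → ∀ x : Pt d,
      c₁ < ρ b x ∧ ρ b x < c₂ ∧
      ‖fderiv ℝ (fun b' => ρ b' x) b‖ < c₃ ∧
      ‖fderiv ℝ (fun b' => fderiv ℝ (fun b'' => ρ b'' x) b') b‖ < c₄

end KFunCLT

open KFunCLT

/-! On the event `dist β̂_n β* ≤ ε` where assumption (R) applies, the mean value theorem applied
to `β ↦ ρ_β(x) ρ_β(y)` gives, summand by summand,
`|1/(ρ_β(x)ρ_β(y)) - 1/(ρ_{β*}(x)ρ_{β*}(y))| ≤ L ‖β - β*‖ / (ρ_{β*}(x)ρ_{β*}(y))`,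
hence `|K̂_{n,β̂_n}(r) - K̂_n(r)| ≤ L ‖β̂_n - β*‖ K̂_n(r)`. Since `K̂_n(r) → K(r)` keeps `K̂_n(r)`
bounded in probability and `β̂_n → β*`, the right-hand side tends to `0` in probability. -/

theorem abs_inv_sub_inv_le {a a' c D : ℝ} (hc : 0 < c) (ha : c ≤ a) (ha' : 0 < a')
    (h : |a - a'| ≤ D) : |a⁻¹ - a'⁻¹| ≤ D / c * a'⁻¹ := by
  have ha0 : 0 < a := hc.trans_le ha
  rw [inv_sub_inv ha0.ne' ha'.ne', abs_div, abs_sub_comm, abs_of_pos (mul_pos ha0 ha'),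
    ← div_div, div_eq_mul_inv _ a']
  have hD : 0 ≤ D := (abs_nonneg _).trans h
  gcongr

theorem Convex.abs_mul_sub_mul_le_of_norm_fderiv_le {E : Type*} [NormedAddCommGroup E]
    [NormedSpace ℝ E] {s : Set E} (hs : Convex ℝ s) {u v : E → ℝ} {M C : ℝ}
    (hu : ∀ b ∈ s, DifferentiableAt ℝ u b) (hv : ∀ b ∈ s, DifferentiableAt ℝ v b)
    (hu_le : ∀ b ∈ s, |u b| ≤ M) (hv_le : ∀ b ∈ s, |v b| ≤ M)
    (hu' : ∀ b ∈ s, ‖fderiv ℝ u b‖ ≤ C) (hv' : ∀ b ∈ s, ‖fderiv ℝ v b‖ ≤ C)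
    {b b' : E} (hb : b ∈ s) (hb' : b' ∈ s) :
    |u b * v b - u b' * v b'| ≤ 2 * M * C * ‖b - b'‖ := by
  rw [← Real.norm_eq_abs]
  refine hs.norm_image_sub_le_of_norm_fderiv_le (f := fun b => u b * v b)
    (fun b hb => (hu b hb).mul (hv b hb)) (fun b hb => ?_) hb' hb
  rw [fderiv_fun_mul (hu b hb) (hv b hb)]
  calc ‖u b • fderiv ℝ v b + v b • fderiv ℝ u b‖
      ≤ |u b| * ‖fderiv ℝ v b‖ + |v b| * ‖fderiv ℝ u b‖ := by
        simpa only [norm_smul, Real.norm_eq_abs] using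
          norm_add_le (u b • fderiv ℝ v b) (v b • fderiv ℝ u b)
    _ ≤ M * C + M * C := by
        have hM : 0 ≤ M := (abs_nonneg _).trans (hu_le b hb)
        gcongr
        exacts [hu_le b hb, hv' b hb, hv_le b hb, hu' b hb]
    _ = 2 * M * C := by ring

theorem MeasureTheory.TendstoInMeasure.of_abs_sub_le_mul_dist {ι Ω E : Type*}
    [MeasurableSpace Ω] {μ : Measure Ω} [PseudoMetricSpace E] {l : Filter ι}
    {X Z : ι → Ω → ℝ} {Y : ι → Ω → E} {a : ℝ} {y₀ : E}
    (hX : TendstoInMeasure μ X l fun _ => a) (hY : TendstoInMeasure μ Y l fun _ => y₀)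
    {ε C : ℝ} (hε : 0 < ε)
    (hZ : ∀ i ω, dist (Y i ω) y₀ ≤ ε → |Z i ω - X i ω| ≤ C * dist (Y i ω) y₀ * |X i ω|) :
    TendstoInMeasure μ Z l fun _ => a := by
  rw [tendstoInMeasure_iff_dist] at hX hY ⊢
  intro η hη
  set K := |C| * (|a| + 1) + 1
  have hK : 0 < K := by positivity
  set δ := min ε (η / (2 * K))
  have hδ : 0 < δ := lt_min hε (by positivity)
  have hsub : ∀ i, {ω | η ≤ dist (Z i ω) a} ⊆
      {ω | min (η / 2) 1 ≤ dist (X i ω) a} ∪ {ω | δ ≤ dist (Y i ω) y₀} := by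
    intro i ω hω
    by_contra hcon
    simp only [Set.mem_union, Set.mem_ofPred_eq, not_or, not_le, lt_min_iff] at hω hcon
    obtain ⟨⟨hXη, hX1⟩, hYδ⟩ := hcon
    rw [Real.dist_eq] at hω hXη hX1
    have hXa : |X i ω| ≤ |a| + 1 := by
      have := abs_sub_abs_le_abs_sub (X i ω) a
      linarith
    have hZX : |Z i ω - X i ω| ≤ η / 2 := calc
      |Z i ω - X i ω| ≤ C * dist (Y i ω) y₀ * |X i ω| := hZ i ω (hYδ.le.trans (min_le_left _ _))
      _ ≤ |C| * δ * (|a| + 1) := by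
        rw [mul_right_comm]
        refine (le_abs_self _).trans ?_
        rw [abs_mul, abs_mul, abs_abs, abs_of_nonneg dist_nonneg, mul_right_comm]
        gcongr
      _ ≤ K * (η / (2 * K)) := by
        have : |C| * (|a| + 1) ≤ K := by linarith
        rw [mul_right_comm]
        gcongr
        exact min_le_right _ _
      _ = η / 2 := by field_simp
    have := abs_sub_le (Z i ω) (X i ω) a
    linarith
  refine tendsto_of_tendsto_of_tendsto_of_le_of_le tendsto_const_nhds
    (by simpa only [add_zero] using (hX _ (by positivity)).add (hY δ hδ)) (fun i => zero_le)
    (fun i => (measure_mono (hsub i)).trans (measure_union_le _ _))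

namespace KFunCLT

open Metric

theorem isCompact_Wn (d n : ℕ) : IsCompact (Wn d n) := by
  have hWn : Wn d n = EuclideanSpace.equiv (Fin d) ℝ ⁻¹'
      Set.univ.pi fun _ => Set.Icc (-((n : ℝ) ^ ((1 : ℝ) / (d : ℝ)) / 2))
        ((n : ℝ) ^ ((1 : ℝ) / (d : ℝ)) / 2) := by
    ext x
    simp only [Wn, Set.mem_preimage, Set.mem_univ_pi, Set.mem_Icc, abs_le]
    rfl
  rw [hWn]
  exact (EuclideanSpace.equiv (Fin d) ℝ).toHomeomorph.isCompact_preimage.2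
    (isCompact_univ_pi fun _ => isCompact_Icc)

theorem finite_pairs {α : Type*} {A : Set α} (hA : A.Finite) : (pairs A).Finite :=
  (hA.prod hA).subset fun _ hq => ⟨hq.1, hq.2.1⟩

theorem abs_pairSum_sub_le {α : Type*} {A : Set α} (hA : A.Finite) {f g : α → α → ℝ} {η : ℝ}
    (hfg : ∀ x y, |f x y - g x y| ≤ η * g x y) :
    |pairSum A f - pairSum A g| ≤ η * pairSum A g := by
  have := (finite_pairs hA).fintype
  simp only [pairSum, tsum_fintype, Finset.mul_sum, ← Finset.sum_sub_distrib]
  exact (Finset.abs_sum_le_sum_abs _ _).trans (Finset.sum_le_sum fun q _ => hfg _ _)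

theorem Khat_nonneg {Ω : Type*} {d p : ℕ} (P : Ω → Set (Pt d))
    (ρ : EuclideanSpace ℝ (Fin p) → Pt d → ℝ) (n : ℕ) {b : EuclideanSpace ℝ (Fin p)}
    (hρ : ∀ x, 0 < ρ b x) (r : ℝ) (ω : Ω) : 0 ≤ Khat P ρ n b r ω := by
  refine tsum_nonneg fun q => ?_
  dsimp only
  split_ifs
  · exact div_nonneg (inv_nonneg.2 ENNReal.toReal_nonneg) (mul_pos (hρ _) (hρ _)).le
  · exact le_rfl

theorem abs_Khat_sub_le {Ω : Type*} {d p : ℕ} {P : Ω → Set (Pt d)}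
    {ρ : EuclideanSpace ℝ (Fin p) → Pt d → ℝ} {n : ℕ} {ω : Ω}
    (hfin : (P ω ∩ Wn d n).Finite) {b b' : EuclideanSpace ℝ (Fin p)} {η : ℝ}
    (hρ : ∀ x y, |(ρ b x * ρ b y)⁻¹ - (ρ b' x * ρ b' y)⁻¹| ≤ η * (ρ b' x * ρ b' y)⁻¹)
    (r : ℝ) : |Khat P ρ n b r ω - Khat P ρ n b' r ω| ≤ η * Khat P ρ n b' r ω := by
  refine abs_pairSum_sub_le hfin fun x y => ?_
  split_ifs
  · have hen : 0 ≤ en d n x y := inv_nonneg.2 ENNReal.toReal_nonneg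
    calc |en d n x y / (ρ b x * ρ b y) - en d n x y / (ρ b' x * ρ b' y)|
        = en d n x y * |(ρ b x * ρ b y)⁻¹ - (ρ b' x * ρ b' y)⁻¹| := by
          rw [div_eq_mul_inv, div_eq_mul_inv, ← mul_sub, abs_mul, abs_of_nonneg hen]
      _ ≤ en d n x y * (η * (ρ b' x * ρ b' y)⁻¹) := by gcongr; exact hρ x y
      _ = η * (en d n x y / (ρ b' x * ρ b' y)) := by ring
  · simp

variable {d p : ℕ} {ρ : EuclideanSpace ℝ (Fin p) → Pt d → ℝ} {βs : EuclideanSpace ℝ (Fin p)}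

theorem AssumptionR.pos (hR : AssumptionR ρ βs) (x : Pt d) : 0 < ρ βs x := by
  obtain ⟨ε, hε, c₁, _, _, _, hc₁, -, -, -, hbd⟩ := hR
  exact hc₁.trans (hbd βs (by simpa using hε.le) x).1

theorem AssumptionR.exists_abs_inv_mul_sub_le (hR : AssumptionR ρ βs)
    (hρ : ∀ x, Differentiable ℝ fun b => ρ b x) :
    ∃ ε > (0 : ℝ), ∃ L : ℝ, ∀ b, dist b βs ≤ ε → ∀ x y,
      |(ρ b x * ρ b y)⁻¹ - (ρ βs x * ρ βs y)⁻¹| ≤ L * dist b βs * (ρ βs x * ρ βs y)⁻¹ := by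
  obtain ⟨ε, hε, c₁, c₂, c₃, _, hc₁, -, -, -, hbd⟩ := hR
  have hball : ∀ b ∈ closedBall βs ε, ∀ x, c₁ < ρ b x ∧ |ρ b x| ≤ c₂ ∧
      ‖fderiv ℝ (fun b' => ρ b' x) b‖ ≤ c₃ := fun b hb x =>
    have ⟨h₁, h₂, h₃, _⟩ := hbd b (mem_closedBall_iff_norm.1 hb) x
    ⟨h₁, abs_le.2 ⟨by linarith, h₂.le⟩, h₃.le⟩
  refine ⟨ε, hε, 2 * c₂ * c₃ / (c₁ * c₁), fun b hb x y => ?_⟩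
  have hb' : b ∈ closedBall βs ε := hb
  have hβs : βs ∈ closedBall βs ε := mem_closedBall_self hε.le
  have hlip := (convex_closedBall βs ε).abs_mul_sub_mul_le_of_norm_fderiv_le
    (u := fun b => ρ b x) (v := fun b => ρ b y) (fun b _ => hρ x b) (fun b _ => hρ y b)
    (fun b hb => (hball b hb x).2.1) (fun b hb => (hball b hb y).2.1)
    (fun b hb => (hball b hb x).2.2) (fun b hb => (hball b hb y).2.2) hb' hβs
  have hlow : c₁ * c₁ ≤ ρ b x * ρ b y :=
    mul_le_mul (hball b hb' x).1.le (hball b hb' y).1.le hc₁.le (hc₁.trans (hball b hb' x).1).le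
  have hpos : 0 < ρ βs x * ρ βs y :=
    mul_pos (hc₁.trans (hball βs hβs x).1) (hc₁.trans (hball βs hβs y).1)
  calc |(ρ b x * ρ b y)⁻¹ - (ρ βs x * ρ βs y)⁻¹|
      ≤ 2 * c₂ * c₃ * ‖b - βs‖ / (c₁ * c₁) * (ρ βs x * ρ βs y)⁻¹ :=
        abs_inv_sub_inv_le (mul_pos hc₁ hc₁) hlow hpos hlip
    _ = 2 * c₂ * c₃ / (c₁ * c₁) * dist b βs * (ρ βs x * ρ βs y)⁻¹ := by
        rw [dist_eq_norm]; ring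

end KFunCLT

theorem statement3_general
    {d p : ℕ}
    {Ω : Type*} [MeasurableSpace Ω] (μ : Measure Ω)
    (P : Ω → Set (Pt d))
    (hPloc : ∀ ω, ∀ K : Set (Pt d), IsCompact K → (P ω ∩ K).Finite)
    (ρ : EuclideanSpace ℝ (Fin p) → Pt d → ℝ) (βs : EuclideanSpace ℝ (Fin p))
    (hρC2 : ∀ x, ContDiff ℝ 2 fun b => ρ b x)
    (hR : AssumptionR ρ βs)
    -- normalized joint intensities and Campbell formulae
    (g : Pt d → ℝ)
    -- assumption (C): consistency of the intensity estimate and of `K̂_n` with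
    -- known intensity, where `K(r) = ∫_{B_r(0)} g(h) dh`
    (βhat : ℕ → Ω → EuclideanSpace ℝ (Fin p))
    (hβcons : TendstoInMeasure μ βhat atTop fun _ => βs)
    (hKcons : ∀ r : ℝ, 0 < r →
      TendstoInMeasure μ (fun n ω => Khat P ρ n βs r ω) atTop
        fun _ => ∫ h in Metric.ball (0 : Pt d) r, g h) :
    ∀ r : ℝ, 0 < r →
      TendstoInMeasure μ (fun n ω => Khat P ρ n (βhat n ω) r ω) atTop
        fun _ => ∫ h in Metric.ball (0 : Pt d) r, g h := by
  intro r hr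
  obtain ⟨ε, hε, L, hlip⟩ :=
    hR.exists_abs_inv_mul_sub_le fun x => (hρC2 x).differentiable (by norm_num)
  refine (hKcons r hr).of_abs_sub_le_mul_dist (C := L) hβcons hε fun n ω hβ => ?_
  rw [abs_of_nonneg (Khat_nonneg P ρ n hR.pos r ω)]
  exact abs_Khat_sub_le (hPloc ω _ (isCompact_Wn d n)) (hlip _ hβ) r

/-- `K̂_{n,β̂_n}(r) → K(r)` in probability, for every `r > 0`. -/
theorem statement3
    {d p : ℕ} (hd : 1 ≤ d)
    {Ω : Type*} [MeasurableSpace Ω] (μ : Measure Ω) [IsProbabilityMeasure μ]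
    (P : Ω → Set (Pt d))
    (hPloc : ∀ ω, ∀ K : Set (Pt d), IsCompact K → (P ω ∩ K).Finite)
    (ρ : EuclideanSpace ℝ (Fin p) → Pt d → ℝ) (βs : EuclideanSpace ℝ (Fin p))
    (hρpos : ∀ b x, 0 < ρ b x)
    (hρC2 : ∀ x, ContDiff ℝ 2 fun b => ρ b x)
    (hR : AssumptionR ρ βs)
    -- normalized joint intensities and Campbell formulae
    (g : Pt d → ℝ) (hgmeas : Measurable g) (hg0 : ∀ x, 0 ≤ g x)
    (g3 : Pt d → Pt d → Pt d → ℝ)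
    (hg3meas : Measurable fun q : Pt d × Pt d × Pt d => g3 q.1 q.2.1 q.2.2)
    (hg3ti : ∀ v x y z : Pt d, g3 (x + v) (y + v) (z + v) = g3 x y z)
    (g4 : Pt d → Pt d → Pt d → Pt d → ℝ)
    (hg4meas : Measurable fun q : Pt d × Pt d × Pt d × Pt d =>
      g4 q.1 q.2.1 q.2.2.1 q.2.2.2)
    (hg4ti : ∀ v x y z w : Pt d, g4 (x + v) (y + v) (z + v) (w + v) = g4 x y z w)
    (hC2 : ∀ f : Pt d → Pt d → ℝ≥0∞, Measurable (Function.uncurry f) →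
      ∫⁻ ω, ∑' q : pairs (P ω), f q.val.1 q.val.2 ∂μ
        = ∫⁻ x, ∫⁻ y, f x y * ENNReal.ofReal (ρ βs x * ρ βs y * g (x - y)))
    (hC3 : ∀ f : Pt d → Pt d → Pt d → ℝ≥0∞,
      Measurable (fun q : Pt d × Pt d × Pt d => f q.1 q.2.1 q.2.2) →
      ∫⁻ ω, ∑' q : triples (P ω), f q.val.1 q.val.2.1 q.val.2.2 ∂μ
        = ∫⁻ x, ∫⁻ y, ∫⁻ z, f x y z *
            ENNReal.ofReal (ρ βs x * ρ βs y * ρ βs z * g3 x y z))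
    (hC4 : ∀ f : Pt d → Pt d → Pt d → Pt d → ℝ≥0∞,
      Measurable (fun q : Pt d × Pt d × Pt d × Pt d => f q.1 q.2.1 q.2.2.1 q.2.2.2) →
      ∫⁻ ω, ∑' q : quads (P ω), f q.val.1 q.val.2.1 q.val.2.2.1 q.val.2.2.2 ∂μ
        = ∫⁻ x, ∫⁻ y, ∫⁻ z, ∫⁻ w, f x y z w *
            ENNReal.ofReal (ρ βs x * ρ βs y * ρ βs z * ρ βs w * g4 x y z w))
    -- boundedness assumption (B)
    (hB : ∃ M : ℝ, (∀ x, |g x| ≤ M) ∧ (∀ x y z, |g3 x y z| ≤ M) ∧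
      (∀ x y z w, |g4 x y z w| ≤ M))
    -- decay assumption (D)
    (hD1 : ∫⁻ h, ENNReal.ofReal |g h - 1| < ⊤)
    (hD2 : (⨆ x : Pt d, ∫⁻ z, ENNReal.ofReal |g3 0 x z - g x|) < ⊤)
    (hD3 : (⨆ u₁ : Pt d, ⨆ u₂ : Pt d,
        ∫⁻ u₄, ENNReal.ofReal |g4 0 u₁ u₄ (u₂ + u₄) - g u₁ * g u₂|) < ⊤)
    -- assumption (C): consistency of the intensity estimate and of `K̂_n` with
    -- known intensity, where `K(r) = ∫_{B_r(0)} g(h) dh`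
    (βhat : ℕ → Ω → EuclideanSpace ℝ (Fin p))
    (hβcons : TendstoInMeasure μ βhat atTop fun _ => βs)
    (hKcons : ∀ r : ℝ, 0 < r →
      TendstoInMeasure μ (fun n ω => Khat P ρ n βs r ω) atTop
        fun _ => ∫ h in Metric.ball (0 : Pt d) r, g h) :
    ∀ r : ℝ, 0 < r →
      TendstoInMeasure μ (fun n ω => Khat P ρ n (βhat n ω) r ω) atTop
        fun _ => ∫ h in Metric.ball (0 : Pt d) r, g h :=
  statement3_general μ P hPloc ρ βs hρC2 hR g βhat hβcons hKcons
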